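/- Define a map g from ℂℙ¹ × ℂℙ¹ to the set of 2-dimensional subspaces of V by: g([a:b],[c:d]) = span{(bX−aY)³, (dX−cY)²(bX−aY)} when [a:b] ≠ [c:d], and g([a:b],[a:b]) = {p ∈ V : (bX−aY)² divides p} ∪ {0}. Then g is well defined, every value of g is a Lagrangian of V containing a perfect cube, g is injective, and the image of g is exactly the set K_ℂ of all Lagrangians of V that contain a perfect cube. -/

import Mathlib

/-!
Write `l = bX - aY`. For a cubic `q` one has `ω(l³, q) = q(a, b)`. Hence every value
`g([a:b], ·)` is spanned by `l³` and a cubic vanishing at `[a:b]`, so it is Lagrangian. Conversely,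
a Lagrangian `W ∋ l³` is spanned by `l³` and some `q = l·Q` with `Q` a binary quadratic. Complete
`l` to coordinates `l, n`. Either `l ∣ Q`, and `W` is the diagonal value, or completing the square
gives `Q ≡ m² (mod l²)` for a linear form `m`, and then `W = span{l³, m²l}`.

For injectivity, every element of `g(P, Q)` vanishes at `P`, and this recovers `P` from the cube in
the other value. If `m'²l ∈ span{l³, m²l}`, then evaluating `m'² = αl² + βm²` at the roots of `l`,
`m` and `m'` forces `m' ∝ m`.
-/

noncomputable section

open MvPolynomial

/-- The polynomial ring `ℂ[X,Y]`. -/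
abbrev P2 : Type := MvPolynomial (Fin 2) ℂ

/-- The variable `X`. -/
def Xv : P2 := X 0

/-- The variable `Y`. -/
def Yv : P2 := X 1

/-- `V`: the space of homogeneous cubic polynomials in `X, Y`. -/
def Vcubic : Submodule ℂ P2 := homogeneousSubmodule (Fin 2) ℂ 3

/-- The coefficient of `X^i Y^j`. -/
def cf (i j : ℕ) (p : P2) : ℂ := coeff (Finsupp.single 0 i + Finsupp.single 1 j) p

/-- The alternating bilinear form `ω` with `ω(X³,Y³) = 1`, `ω(X²Y,XY²) = -1/3`,
all other pairings of distinct basis vectors being `0`. -/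
def omegaForm (p q : P2) : ℂ :=
  cf 3 0 p * cf 0 3 q - cf 0 3 p * cf 3 0 q
    - (1 / 3) * (cf 2 1 p * cf 1 2 q - cf 1 2 p * cf 2 1 q)

/-- The linear form `b X - a Y` associated to the point `[a : b] ∈ ℂℙ¹`. -/
def lf (a b : ℂ) : P2 := C b * Xv - C a * Yv

/-- A Lagrangian of `V`: a 2-dimensional subspace contained in `V` on which `ω` vanishes. -/
def IsLagrangian (W : Submodule ℂ P2) : Prop :=
  W ≤ Vcubic ∧ Module.finrank ℂ W = 2 ∧ ∀ p ∈ W, ∀ q ∈ W, omegaForm p q = 0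

/-- A perfect cube: a nonzero element of the form `c • (bX - aY)³`. -/
def IsPerfectCube (p : P2) : Prop :=
  ∃ c a b : ℂ, c ≠ 0 ∧ (a ≠ 0 ∨ b ≠ 0) ∧ p = C c * lf a b ^ 3

/-- The action of `SL(2,ℂ)` on `ℂ[X,Y]` by linear substitution of the variables. -/
def subst (g : Matrix.SpecialLinearGroup (Fin 2) ℂ) : P2 →ₐ[ℂ] P2 :=
  aeval (fun i => C (g.1 i 0) * Xv + C (g.1 i 1) * Yv)

/-- The induced action of `SL(2,ℂ)` on subspaces of `ℂ[X,Y]`. -/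
def mapAct (g : Matrix.SpecialLinearGroup (Fin 2) ℂ) (W : Submodule ℂ P2) :
    Submodule ℂ P2 :=
  W.map (subst g).toLinearMap

/-- The `SL(2,ℂ)`-orbit of a subspace. -/
def slOrbit (W₀ : Submodule ℂ P2) : Set (Submodule ℂ P2) := {W | ∃ g, W = mapAct g W₀}

/-- The subspace of polynomials divisible by a fixed polynomial `q`. -/
def divisibleSub (q : P2) : Submodule ℂ P2 :=
  Submodule.restrictScalars ℂ (Ideal.span {q})

/-- The map `g` of Statement 3: for `[a:b] ≠ [c:d]` it is
`span{(bX-aY)³, (dX-cY)²(bX-aY)}`; on the diagonal it is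
`{p ∈ V : (bX-aY)² ∣ p} ∪ {0}` (which, as a subspace, is `V ⊓ ((bX-aY)²)`). -/
def gmap (a b c d : ℂ) : Submodule ℂ P2 :=
  if a * d - b * c = 0 then Vcubic ⊓ divisibleSub (lf a b ^ 2)
  else Submodule.span ℂ {lf a b ^ 3, lf c d ^ 2 * lf a b}

section Coordinates

lemma single_add_single_eq_iff {i j k l : ℕ} :
    (Finsupp.single 0 k + Finsupp.single 1 l : Fin 2 →₀ ℕ) =
      Finsupp.single 0 i + Finsupp.single 1 j ↔ k = i ∧ l = j :=
  ⟨fun h => ⟨by simpa using DFunLike.congr_fun h 0, by simpa using DFunLike.congr_fun h 1⟩,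
    fun ⟨hk, hl⟩ => hk ▸ hl ▸ rfl⟩

lemma X_pow_mul_Y_pow (k l : ℕ) :
    Xv ^ k * Yv ^ l = monomial (Finsupp.single 0 k + Finsupp.single 1 l) (1 : ℂ) := by
  rw [Xv, Yv, X_pow_eq_monomial, X_pow_eq_monomial, monomial_mul, one_mul]

lemma cf_add (i j : ℕ) (p q : P2) : cf i j (p + q) = cf i j p + cf i j q := coeff_add _ _ _

lemma cf_smul (i j : ℕ) (s : ℂ) (p : P2) : cf i j (s • p) = s * cf i j p := coeff_smul _ _ _

lemma cf_C_mul (i j : ℕ) (s : ℂ) (p : P2) : cf i j (C s * p) = s * cf i j p := coeff_C_mul _ _ _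

lemma cf_X_pow_mul_Y_pow (i j k l : ℕ) :
    cf i j (Xv ^ k * Yv ^ l) = if k = i ∧ l = j then 1 else 0 := by
  rw [cf, X_pow_mul_Y_pow, coeff_monomial]
  exact if_congr single_add_single_eq_iff rfl rfl

lemma eq_cubic_of_mem_Vcubic {q : P2} (hq : q ∈ Vcubic) :
    q = C (cf 3 0 q) * (Xv ^ 3 * Yv ^ 0) + C (cf 2 1 q) * (Xv ^ 2 * Yv ^ 1)
      + C (cf 1 2 q) * (Xv ^ 1 * Yv ^ 2) + C (cf 0 3 q) * (Xv ^ 0 * Yv ^ 3) := by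
  ext d
  obtain ⟨i, j, rfl⟩ : ∃ i j, d = Finsupp.single 0 i + Finsupp.single 1 j :=
    ⟨d 0, d 1, by ext k; fin_cases k <;> simp⟩
  simp only [coeff_add, coeff_C_mul, X_pow_mul_Y_pow, coeff_monomial, single_add_single_eq_iff]
  by_cases h : i + j = 3
  · obtain rfl : j = 3 - i := by omega
    have : i ≤ 3 := by omega
    interval_cases i <;> simp [cf]
  · rw [(mem_homogeneousSubmodule _ _).mp hq |>.coeff_eq_zero (by simpa using h)]
    split_ifs <;> first | omega | simp

lemma omegaForm_eq_zero_of_mem_span_pair {u v : P2} (h : omegaForm u v = 0) {p q : P2}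
    (hp : p ∈ Submodule.span ℂ {u, v}) (hq : q ∈ Submodule.span ℂ {u, v}) : omegaForm p q = 0 := by
  obtain ⟨s, t, rfl⟩ := Submodule.mem_span_pair.mp hp
  obtain ⟨s', t', rfl⟩ := Submodule.mem_span_pair.mp hq
  have : omegaForm (s • u + t • v) (s' • u + t' • v) = (s * t' - t * s') * omegaForm u v := by
    simp only [omegaForm, cf_add, cf_smul]
    ring
  rw [this, h, mul_zero]

end Coordinates

section LinearForms

variable {a b c d e f : ℂ}

lemma eval_lf (a b x y : ℂ) : eval ![x, y] (lf a b) = b * x - a * y := by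
  simp [lf, Xv, Yv]

lemma eval_lf_self (a b : ℂ) : eval ![a, b] (lf a b) = 0 := by
  rw [eval_lf]; ring

lemma eval_lf_of_det_eq_one (hdet : a * f - b * e = 1) : eval ![a, b] (lf e f) = 1 := by
  rw [eval_lf]; linear_combination hdet

lemma eval_eq_zero_of_lf_dvd {p : P2} (h : lf a b ∣ p) : eval ![a, b] p = 0 := by
  obtain ⟨r, rfl⟩ := h
  rw [map_mul, eval_lf_self, zero_mul]

lemma ne_zero_or_ne_zero_of_det_ne_zero (h : a * d - b * c ≠ 0) :
    (a ≠ 0 ∨ b ≠ 0) ∧ (c ≠ 0 ∨ d ≠ 0) := by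
  constructor <;> by_contra! h0 <;> simp [h0.1, h0.2] at h

lemma exists_det_eq_one (hab : a ≠ 0 ∨ b ≠ 0) : ∃ e f : ℂ, a * f - b * e = 1 := by
  rcases hab with ha | hb
  · exact ⟨0, a⁻¹, by field_simp; ring⟩
  · exact ⟨-b⁻¹, 0, by field_simp; ring⟩

lemma lf_ne_zero (hab : a ≠ 0 ∨ b ≠ 0) : lf a b ≠ 0 := by
  intro h
  rcases hab with ha | hb
  · apply ha; simpa [eval_lf] using congrArg (eval ![0, 1]) h
  · apply hb; simpa [eval_lf] using congrArg (eval ![1, 0]) h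

lemma lf_mul_left (t a b : ℂ) : lf (t * a) (t * b) = C t * lf a b := by
  simp only [lf, map_mul]; ring

lemma isHomogeneous_lf (a b : ℂ) : (lf a b).IsHomogeneous 1 :=
  ((isHomogeneous_X ℂ 0).C_mul b).sub ((isHomogeneous_X ℂ 1).C_mul a)

lemma mul_lf_mem_Vcubic (a b c d e f : ℂ) : lf a b * lf c d * lf e f ∈ Vcubic :=
  ((isHomogeneous_lf a b).mul (isHomogeneous_lf c d)).mul (isHomogeneous_lf e f)

lemma lf_cube_mem_Vcubic (a b : ℂ) : lf a b ^ 3 ∈ Vcubic := by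
  rw [pow_three']; exact mul_lf_mem_Vcubic _ _ _ _ _ _

lemma lf_sq_mul_mem_Vcubic (a b c d : ℂ) : lf a b ^ 2 * lf c d ∈ Vcubic := by
  rw [sq]; exact mul_lf_mem_Vcubic _ _ _ _ _ _

lemma eval_C_mul_X_pow_mul_Y_pow (s x y : ℂ) (k l : ℕ) :
    eval ![x, y] (C s * (Xv ^ k * Yv ^ l)) = s * (x ^ k * y ^ l) := by
  simp [Xv, Yv]

lemma omegaForm_lf_cube (a b : ℂ) {q : P2} (hq : q ∈ Vcubic) :
    omegaForm (lf a b ^ 3) q = eval ![a, b] q := by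
  have hcube : lf a b ^ 3 = C (b ^ 3) * (Xv ^ 3 * Yv ^ 0) + C (-(3 * a * b ^ 2)) * (Xv ^ 2 * Yv ^ 1)
      + C (3 * a ^ 2 * b) * (Xv ^ 1 * Yv ^ 2) + C (-a ^ 3) * (Xv ^ 0 * Yv ^ 3) := by
    simp only [lf, map_neg, map_mul, map_pow, map_ofNat]
    ring
  conv_rhs => rw [eq_cubic_of_mem_Vcubic hq]; simp only [map_add, eval_C_mul_X_pow_mul_Y_pow]
  rw [omegaForm, hcube]
  simp only [cf_add, cf_C_mul, cf_X_pow_mul_Y_pow, Nat.reduceEqDiff, and_self, ↓reduceIte]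
  ring

lemma exists_eq_cubic_in_lf (hdet : a * f - b * e = 1) {q : P2} (hq : q ∈ Vcubic) :
    ∃ α₀ α₁ α₂ α₃ : ℂ, q = C α₀ * lf e f ^ 3 + C α₁ * (lf e f ^ 2 * lf a b)
      + C α₂ * (lf e f * lf a b ^ 2) + C α₃ * lf a b ^ 3 := by
  set σ : P2 →ₐ[ℂ] P2 := aeval ![lf e f, lf a b]
  set τ : P2 →ₐ[ℂ] P2 := aeval ![C a * Xv - C e * Yv, C b * Xv - C f * Yv]
  have hC : C a * C f - C b * C e = (1 : P2) := by
    rw [← map_mul, ← map_mul, ← map_sub, hdet, map_one]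
  have hστ : σ.comp τ = AlgHom.id ℂ P2 := by
    refine MvPolynomial.algHom_ext (Fin.forall_fin_two.mpr ⟨?_, ?_⟩) <;>
      simp only [σ, τ, AlgHom.comp_apply, AlgHom.id_apply, Xv, Yv, lf, aeval_X, map_sub, map_mul,
        aeval_C, algebraMap_eq, Matrix.cons_val_zero, Matrix.cons_val_one, Matrix.cons_val_fin_one]
    · linear_combination (X 0 : P2) * hC
    · linear_combination (X 1 : P2) * hC
  have hτq : τ q ∈ Vcubic := by
    have hlin : ∀ s t : ℂ, (C s * Xv - C t * Yv).IsHomogeneous 1 := fun s t => isHomogeneous_lf t s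
    have := ((mem_homogeneousSubmodule _ _).mp hq).aeval
      ![C a * Xv - C e * Yv, C b * Xv - C f * Yv] (n := 1)
      (fun i => by fin_cases i; exacts [hlin a e, hlin b f])
    rwa [one_mul] at this
  refine ⟨cf 3 0 (τ q), cf 2 1 (τ q), cf 1 2 (τ q), cf 0 3 (τ q), ?_⟩
  calc q = σ (τ q) := by rw [← AlgHom.comp_apply, hστ, AlgHom.id_apply]
    _ = _ := by
      conv_lhs => rw [eq_cubic_of_mem_Vcubic hτq]
      simp [σ, Xv, Yv]

lemma finrank_span_pair_eq_two {K M : Type*} [DivisionRing K] [AddCommGroup M] [Module K M]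
    {x y : M} (hx : x ≠ 0) (hy : y ∉ K ∙ x) : Module.finrank K (Submodule.span K {x, y}) = 2 := by
  have hli : LinearIndependent K ![y, x] := linearIndependent_fin2.mpr
    ⟨by simpa using hx, fun s hs => hy (Submodule.mem_span_singleton.mpr ⟨s, by simpa using hs⟩)⟩
  rw [Set.pair_comm, ← Matrix.range_cons_cons_empty y x ![], finrank_span_eq_card hli,
    Fintype.card_fin]

lemma span_eq_of_isLagrangian {W : Submodule ℂ P2} (hW : IsLagrangian W) {x y : P2}
    (hle : Submodule.span ℂ {x, y} ≤ W) (h2 : Module.finrank ℂ (Submodule.span ℂ {x, y}) = 2) :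
    Submodule.span ℂ {x, y} = W :=
  have : FiniteDimensional ℂ W := Module.finite_of_finrank_eq_succ hW.2.1
  Submodule.eq_of_le_of_finrank_eq hle (h2.trans hW.2.1.symm)

lemma notMem_span_lf_cube {x y : ℂ} {q : P2} (hq : q ≠ 0) (hq0 : eval ![x, y] q = 0)
    (hl : eval ![x, y] (lf a b) ≠ 0) : q ∉ ℂ ∙ lf a b ^ 3 := by
  rw [Submodule.mem_span_singleton]
  rintro ⟨s, rfl⟩
  rw [smul_eq_C_mul, map_mul, map_pow, eval_C] at hq0
  obtain rfl : s = 0 := by simpa [hl] using hq0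
  exact hq (zero_smul _ _)

lemma isLagrangian_span_lf_cube (hab : a ≠ 0 ∨ b ≠ 0) {q : P2} (hqV : q ∈ Vcubic)
    (hq0 : eval ![a, b] q = 0) (hq : q ∉ ℂ ∙ lf a b ^ 3) :
    IsLagrangian (Submodule.span ℂ {lf a b ^ 3, q}) := by
  refine ⟨?_, finrank_span_pair_eq_two (pow_ne_zero 3 (lf_ne_zero hab)) hq, fun p hp p' hp' =>
    omegaForm_eq_zero_of_mem_span_pair (by rw [omegaForm_lf_cube a b hqV, hq0]) hp hp'⟩
  rw [Submodule.span_le]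
  rintro x (rfl | rfl)
  exacts [lf_cube_mem_Vcubic a b, hqV]

end LinearForms

section ValuesOfG

variable {a b c d e f : ℂ}

lemma mem_divisibleSub {p q : P2} : p ∈ divisibleSub q ↔ q ∣ p := by
  rw [divisibleSub, Submodule.restrictScalars_mem, Ideal.mem_span_singleton]

lemma divisibleSub_C_mul {t : ℂ} (ht : t ≠ 0) (u : P2) :
    divisibleSub (C t * u) = divisibleSub u := by
  rw [divisibleSub, divisibleSub, Ideal.span_singleton_mul_left_unit ((Ne.isUnit ht).map C)]

lemma Vcubic_inf_divisibleSub_lf_sq (hdet : a * f - b * e = 1) :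
    Vcubic ⊓ divisibleSub (lf a b ^ 2) = Submodule.span ℂ {lf a b ^ 3, lf a b ^ 2 * lf e f} := by
  have hl := lf_ne_zero (ne_zero_or_ne_zero_of_det_ne_zero (hdet ▸ one_ne_zero)).1
  apply le_antisymm
  · rintro p ⟨hpV, hpD⟩
    replace hpD := mem_divisibleSub.mp hpD
    obtain ⟨α₀, α₁, α₂, α₃, rfl⟩ := exists_eq_cubic_in_lf hdet hpV
    obtain rfl : α₀ = 0 := by
      simpa [eval_lf_self, eval_lf_of_det_eq_one hdet] using
        eval_eq_zero_of_lf_dvd (dvd_trans (dvd_pow_self _ two_ne_zero) hpD)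
    obtain rfl : α₁ = 0 := by
      rw [show C 0 * lf e f ^ 3 + C α₁ * (lf e f ^ 2 * lf a b) + C α₂ * (lf e f * lf a b ^ 2)
          + C α₃ * lf a b ^ 3
          = lf a b * (C α₁ * lf e f ^ 2 + lf a b * (C α₂ * lf e f + C α₃ * lf a b))
          by simp only [map_zero]; ring, sq, mul_dvd_mul_iff_left hl] at hpD
      simpa [eval_lf_self, eval_lf_of_det_eq_one hdet] using eval_eq_zero_of_lf_dvd hpD
    exact Submodule.mem_span_pair.mpr ⟨α₃, α₂, by simp only [smul_eq_C_mul, map_zero]; ring⟩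
  · rw [Submodule.span_le]
    rintro x (rfl | rfl)
    · exact ⟨lf_cube_mem_Vcubic a b, mem_divisibleSub.mpr ⟨lf a b, by ring⟩⟩
    · exact ⟨lf_sq_mul_mem_Vcubic a b e f, mem_divisibleSub.mpr (dvd_mul_right _ _)⟩

lemma gmap_of_det_eq_zero (h : a * d - b * c = 0) :
    gmap a b c d = Vcubic ⊓ divisibleSub (lf a b ^ 2) := if_pos h

lemma gmap_of_det_ne_zero (h : a * d - b * c ≠ 0) :
    gmap a b c d = Submodule.span ℂ {lf a b ^ 3, lf c d ^ 2 * lf a b} := if_neg h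

lemma exists_gmap_eq_span_lf_cube (hab : a ≠ 0 ∨ b ≠ 0) (hcd : c ≠ 0 ∨ d ≠ 0) :
    ∃ q ∈ Vcubic, eval ![a, b] q = 0 ∧ q ∉ ℂ ∙ lf a b ^ 3 ∧
      gmap a b c d = Submodule.span ℂ {lf a b ^ 3, q} := by
  by_cases h : a * d - b * c = 0
  · obtain ⟨e, f, hdet⟩ := exists_det_eq_one hab
    refine ⟨lf a b ^ 2 * lf e f, lf_sq_mul_mem_Vcubic a b e f,
      eval_eq_zero_of_lf_dvd ⟨lf a b * lf e f, by ring⟩, notMem_span_lf_cube (x := e) (y := f)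
        (mul_ne_zero (pow_ne_zero 2 (lf_ne_zero hab))
          (lf_ne_zero (ne_zero_or_ne_zero_of_det_ne_zero (hdet ▸ one_ne_zero)).2)) ?_ ?_,
      by rw [gmap_of_det_eq_zero h, Vcubic_inf_divisibleSub_lf_sq hdet]⟩
    · rw [map_mul, eval_lf_self, mul_zero]
    · rw [eval_lf, show b * e - a * f = -1 by linear_combination -hdet]
      exact neg_ne_zero.mpr one_ne_zero
  · refine ⟨lf c d ^ 2 * lf a b, lf_sq_mul_mem_Vcubic c d a b,
      eval_eq_zero_of_lf_dvd (dvd_mul_left _ _), notMem_span_lf_cube (x := c) (y := d)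
        (mul_ne_zero (pow_ne_zero 2 (lf_ne_zero hcd)) (lf_ne_zero hab)) ?_ ?_,
      gmap_of_det_ne_zero h⟩
    · rw [map_mul, map_pow, eval_lf_self, zero_pow two_ne_zero, zero_mul]
    · rw [eval_lf]; contrapose! h; linear_combination -h

lemma isLagrangian_gmap (hab : a ≠ 0 ∨ b ≠ 0) (hcd : c ≠ 0 ∨ d ≠ 0) :
    IsLagrangian (gmap a b c d) := by
  obtain ⟨q, hqV, hq0, hq, hg⟩ := exists_gmap_eq_span_lf_cube hab hcd
  exact hg ▸ isLagrangian_span_lf_cube hab hqV hq0 hq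

lemma lf_cube_mem_gmap (hab : a ≠ 0 ∨ b ≠ 0) (hcd : c ≠ 0 ∨ d ≠ 0) :
    lf a b ^ 3 ∈ gmap a b c d := by
  obtain ⟨q, -, -, -, hg⟩ := exists_gmap_eq_span_lf_cube hab hcd
  exact hg ▸ Submodule.subset_span (Set.mem_insert _ _)

lemma sq_mul_mem_gmap (h : a * d - b * c ≠ 0) : lf c d ^ 2 * lf a b ∈ gmap a b c d := by
  rw [gmap_of_det_ne_zero h]
  exact Submodule.subset_span (Set.mem_insert_of_mem _ rfl)

lemma eval_eq_zero_of_mem_gmap (hab : a ≠ 0 ∨ b ≠ 0) (hcd : c ≠ 0 ∨ d ≠ 0)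
    {p : P2} (hp : p ∈ gmap a b c d) : eval ![a, b] p = 0 := by
  obtain ⟨q, -, hq0, -, hg⟩ := exists_gmap_eq_span_lf_cube hab hcd
  obtain ⟨s, t, rfl⟩ := Submodule.mem_span_pair.mp (hg ▸ hp)
  simp [smul_eq_C_mul, hq0, eval_lf_self]

lemma gmap_mul_left {s t : ℂ} (ht : t ≠ 0) (hs : s ≠ 0) (a b c d : ℂ) :
    gmap (t * a) (t * b) (s * c) (s * d) = gmap a b c d := by
  have hdet : t * a * (s * d) - t * b * (s * c) = t * s * (a * d - b * c) := by ring
  simp only [gmap, hdet, mul_eq_zero, ht, hs, false_or, lf_mul_left]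
  split_ifs
  · rw [mul_pow, ← map_pow, divisibleSub_C_mul (pow_ne_zero 2 ht)]
  · rw [show (C t * lf a b) ^ 3 = t ^ 3 • lf a b ^ 3 by
        rw [smul_eq_C_mul]; simp only [map_pow]; ring,
      show (C s * lf c d) ^ 2 * (C t * lf a b) = (s ^ 2 * t) • (lf c d ^ 2 * lf a b) by
        rw [smul_eq_C_mul]; simp only [map_mul, map_pow]; ring,
      Submodule.span_insert, Submodule.span_insert,
      Submodule.span_singleton_smul_eq (pow_ne_zero 3 ht).isUnit,
      Submodule.span_singleton_smul_eq (mul_ne_zero (pow_ne_zero 2 hs) ht).isUnit]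

lemma exists_eq_mul_of_cross_eq {a' b' : ℂ} (hab : a ≠ 0 ∨ b ≠ 0) (hab' : a' ≠ 0 ∨ b' ≠ 0)
    (h : a * b' = a' * b) : ∃ t ≠ 0, a' = t * a ∧ b' = t * b := by
  rcases eq_or_ne a 0 with rfl | ha
  · have hb : b ≠ 0 := hab.resolve_left (not_not.mpr rfl)
    obtain rfl : a' = 0 := by simpa [hb] using h.symm
    exact ⟨b' / b, div_ne_zero (hab'.resolve_left (not_not.mpr rfl)) hb, by ring, by field_simp⟩
  · have ha' : a' ≠ 0 := by
      rintro rfl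
      exact hab'.elim (· rfl) fun hb' => hb' (by simpa [ha] using h)
    exact ⟨a' / a, div_ne_zero ha' ha, by field_simp, by field_simp; linear_combination h⟩

lemma gmap_congr {a' b' c' d' : ℂ} (hab : a ≠ 0 ∨ b ≠ 0) (hcd : c ≠ 0 ∨ d ≠ 0)
    (hab' : a' ≠ 0 ∨ b' ≠ 0) (hcd' : c' ≠ 0 ∨ d' ≠ 0) (h₁ : a * b' = a' * b)
    (h₂ : c * d' = c' * d) :
    gmap a b c d = gmap a' b' c' d' := by
  obtain ⟨t, ht, rfl, rfl⟩ := exists_eq_mul_of_cross_eq hab hab' h₁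
  obtain ⟨s, hs, rfl, rfl⟩ := exists_eq_mul_of_cross_eq hcd hcd' h₂
  exact (gmap_mul_left ht hs a b c d).symm

end ValuesOfG

section Injectivity

variable {a b c d a' b' c' d' : ℂ}

lemma cross_eq_of_lf_cube_mem_gmap (hab : a ≠ 0 ∨ b ≠ 0) (hcd : c ≠ 0 ∨ d ≠ 0)
    (h : lf a' b' ^ 3 ∈ gmap a b c d) : a * b' = a' * b := by
  have h0 := eval_eq_zero_of_mem_gmap hab hcd h
  rw [map_pow, eval_lf] at h0
  linear_combination pow_eq_zero_iff three_ne_zero |>.mp h0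

lemma cross_eq_of_sq_mul_mem_gmap (hab : a ≠ 0 ∨ b ≠ 0) (hA : a * d' - b * c' ≠ 0)
    (h : lf c' d' ^ 2 * lf a b ∈ gmap a b c d) : c * d' = c' * d := by
  have hl := lf_ne_zero hab
  by_cases hB : a * d - b * c = 0
  · rw [gmap_of_det_eq_zero hB] at h
    have hdvd : lf a b * lf a b ∣ lf a b * lf c' d' ^ 2 := by
      rw [← sq, mul_comm]; exact mem_divisibleSub.mp h.2
    have h0 := eval_eq_zero_of_lf_dvd ((mul_dvd_mul_iff_left hl).mp hdvd)
    rw [map_pow, eval_lf] at h0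
    exact absurd (by linear_combination pow_eq_zero_iff two_ne_zero |>.mp h0) hA
  · rw [gmap_of_det_ne_zero hB] at h
    obtain ⟨α, β, hαβ⟩ := Submodule.mem_span_pair.mp h
    have hq : C α * lf a b ^ 2 + C β * lf c d ^ 2 = lf c' d' ^ 2 := by
      refine mul_right_cancel₀ hl ?_
      rw [← hαβ, smul_eq_C_mul, smul_eq_C_mul]; ring
    have E₁ := congrArg (eval ![a, b]) hq
    have E₂ := congrArg (eval ![c, d]) hq
    have E₃ := congrArg (eval ![c', d']) hq
    simp only [map_add, map_mul, map_pow, eval_C, eval_lf] at E₁ E₂ E₃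
    -- with `A = ad' - bc'`, `B = ad - bc`, `M = cd' - c'd`: `E₁ : βB² = A²`, `E₂ : αB² = M²`,
    -- `E₃ : αA² + βM² = 0`, so `B² E₃` reads `2A²M² = 0`
    have : ((a * d' - b * c') * (c * d' - c' * d)) ^ 2 = 0 := by
      linear_combination ((a * d - b * c) ^ 2 * E₃ - (a * d' - b * c') ^ 2 * E₂
        - (c * d' - c' * d) ^ 2 * E₁) / 2
    have hM := (mul_eq_zero.mp (pow_eq_zero_iff two_ne_zero |>.mp this)).resolve_left hA
    linear_combination hM

lemma cross_eq_of_det_eq_zero (hab : a ≠ 0 ∨ b ≠ 0) (h : a * d - b * c = 0)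
    (h' : a * d' - b * c' = 0) : c * d' = c' * d := by
  have ha : a * (c * d' - c' * d) = 0 := by linear_combination c * h' - c' * h
  have hb : b * (c * d' - c' * d) = 0 := by linear_combination d * h' - d' * h
  rcases hab with ha0 | hb0
  · linear_combination (mul_eq_zero.mp ha).resolve_left ha0
  · linear_combination (mul_eq_zero.mp hb).resolve_left hb0

lemma cross_eq_of_gmap_eq (hab : a ≠ 0 ∨ b ≠ 0) (h : gmap a b c d = gmap a b c' d') :
    c * d' = c' * d := by
  by_cases hA : a * d' - b * c' = 0
  · by_cases hB : a * d - b * c = 0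
    · exact cross_eq_of_det_eq_zero hab hB hA
    · exact (cross_eq_of_sq_mul_mem_gmap hab hB (h ▸ sq_mul_mem_gmap hB)).symm
  · exact cross_eq_of_sq_mul_mem_gmap hab hA (h ▸ sq_mul_mem_gmap hA)

end Injectivity

section Surjectivity

variable {a b : ℂ}

lemma exists_span_lf_cube_eq_gmap (hab : a ≠ 0 ∨ b ≠ 0) {q : P2} (hqV : q ∈ Vcubic)
    (hq0 : eval ![a, b] q = 0) (hq : q ∉ ℂ ∙ lf a b ^ 3) :
    ∃ c d : ℂ, (c ≠ 0 ∨ d ≠ 0) ∧ Submodule.span ℂ {lf a b ^ 3, q} = gmap a b c d := by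
  suffices ∃ c d : ℂ, (c ≠ 0 ∨ d ≠ 0) ∧ q ∈ gmap a b c d by
    obtain ⟨c, d, hcd, hqg⟩ := this
    refine ⟨c, d, hcd, span_eq_of_isLagrangian (isLagrangian_gmap hab hcd) ?_
      (isLagrangian_span_lf_cube hab hqV hq0 hq).2.1⟩
    rw [Submodule.span_le]
    rintro x (rfl | rfl)
    exacts [lf_cube_mem_gmap hab hcd, hqg]
  obtain ⟨e, f, hdet⟩ := exists_det_eq_one hab
  obtain ⟨α₀, α₁, α₂, α₃, rfl⟩ := exists_eq_cubic_in_lf hdet hqV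
  obtain rfl : α₀ = 0 := by simpa [eval_lf_self, eval_lf_of_det_eq_one hdet] using hq0
  by_cases hα₁ : α₁ = 0
  · subst hα₁
    refine ⟨a, b, hab, ?_⟩
    rw [gmap_of_det_eq_zero (by ring)]
    exact ⟨hqV, mem_divisibleSub.mpr ⟨C α₂ * lf e f + C α₃ * lf a b, by simp only [map_zero]; ring⟩⟩
  · -- completing the square: with `n = lf e f`, `l = lf a b`,
    -- `α₁ n² + α₂ n l + ν² l² = (μ n + ν l)²`
    obtain ⟨μ, hμ⟩ := IsAlgClosed.exists_pow_nat_eq α₁ two_pos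
    have hμ0 : μ ≠ 0 := by rintro rfl; exact hα₁ (by simpa using hμ.symm)
    set ν := α₂ / (2 * μ)
    have hdet' : a * (μ * f + ν * b) - b * (μ * e + ν * a) ≠ 0 := by
      rw [show a * (μ * f + ν * b) - b * (μ * e + ν * a) = μ by linear_combination μ * hdet]
      exact hμ0
    refine ⟨_, _, (ne_zero_or_ne_zero_of_det_ne_zero hdet').2, ?_⟩
    rw [gmap_of_det_ne_zero hdet']
    refine Submodule.mem_span_pair.mpr ⟨α₃ - ν ^ 2, 1, ?_⟩
    have hα₂ : α₂ = 2 * μ * ν := (mul_div_cancel₀ _ (mul_ne_zero two_ne_zero hμ0)).symm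
    rw [← hμ, hα₂]
    simp only [smul_eq_C_mul, lf, map_add, map_sub, map_mul, map_pow, map_one, map_zero, map_ofNat]
    ring

lemma exists_gmap_eq_of_isLagrangian {W : Submodule ℂ P2} (hW : IsLagrangian W)
    (hab : a ≠ 0 ∨ b ≠ 0) (hl : lf a b ^ 3 ∈ W) :
    ∃ c d : ℂ, (c ≠ 0 ∨ d ≠ 0) ∧ W = gmap a b c d := by
  obtain ⟨q, hqW, hq⟩ : ∃ q ∈ W, q ∉ ℂ ∙ lf a b ^ 3 := by
    by_contra! h
    have := Submodule.finrank_mono (show W ≤ ℂ ∙ lf a b ^ 3 from h)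
    rw [hW.2.1, finrank_span_singleton (pow_ne_zero 3 (lf_ne_zero hab))] at this
    omega
  have hqV := hW.1 hqW
  have hq0 : eval ![a, b] q = 0 := omegaForm_lf_cube a b hqV ▸ hW.2.2 _ hl _ hqW
  obtain ⟨c, d, hcd, hg⟩ := exists_span_lf_cube_eq_gmap hab hqV hq0 hq
  refine ⟨c, d, hcd, hg ▸ (span_eq_of_isLagrangian hW ?_ ?_).symm⟩
  · rw [Submodule.span_le]
    rintro x (rfl | rfl)
    exacts [hl, hqW]
  · exact (isLagrangian_span_lf_cube hab hqV hq0 hq).2.1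

lemma exists_lf_cube_mem_of_isPerfectCube {W : Submodule ℂ P2} {p : P2} (hp : p ∈ W)
    (hc : IsPerfectCube p) : ∃ a b : ℂ, (a ≠ 0 ∨ b ≠ 0) ∧ lf a b ^ 3 ∈ W := by
  obtain ⟨c, a, b, hc, hab, rfl⟩ := hc
  refine ⟨a, b, hab, ?_⟩
  simpa [← smul_eq_C_mul, smul_smul, hc] using W.smul_mem c⁻¹ hp

end Surjectivity

/-- `g` is well defined on `ℂℙ¹ × ℂℙ¹`, every value of `g` is a Lagrangian
of `V` containing a perfect cube, `g` is injective, and the image of `g` is exactly the set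
`K_ℂ` of Lagrangians of `V` containing a perfect cube. -/
theorem statement3 :
    -- well defined: the value only depends on the projective classes
    (∀ a b c d a' b' c' d' : ℂ,
      (a ≠ 0 ∨ b ≠ 0) → (c ≠ 0 ∨ d ≠ 0) → (a' ≠ 0 ∨ b' ≠ 0) → (c' ≠ 0 ∨ d' ≠ 0) →
      a * b' = a' * b → c * d' = c' * d → gmap a b c d = gmap a' b' c' d') ∧
    -- every value is a Lagrangian containing a perfect cube
    (∀ a b c d : ℂ, (a ≠ 0 ∨ b ≠ 0) → (c ≠ 0 ∨ d ≠ 0) →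
      IsLagrangian (gmap a b c d) ∧ ∃ p ∈ gmap a b c d, IsPerfectCube p) ∧
    -- injectivity on ℂℙ¹ × ℂℙ¹
    (∀ a b c d a' b' c' d' : ℂ,
      (a ≠ 0 ∨ b ≠ 0) → (c ≠ 0 ∨ d ≠ 0) → (a' ≠ 0 ∨ b' ≠ 0) → (c' ≠ 0 ∨ d' ≠ 0) →
      gmap a b c d = gmap a' b' c' d' → a * b' = a' * b ∧ c * d' = c' * d) ∧
    -- the image is exactly K_ℂ
    (∀ W : Submodule ℂ P2,
      (IsLagrangian W ∧ ∃ p ∈ W, IsPerfectCube p) ↔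
        ∃ a b c d : ℂ, (a ≠ 0 ∨ b ≠ 0) ∧ (c ≠ 0 ∨ d ≠ 0) ∧ W = gmap a b c d) := by
  have hvalue : ∀ a b c d : ℂ, (a ≠ 0 ∨ b ≠ 0) → (c ≠ 0 ∨ d ≠ 0) →
      IsLagrangian (gmap a b c d) ∧ ∃ p ∈ gmap a b c d, IsPerfectCube p :=
    fun a b c d hab hcd => ⟨isLagrangian_gmap hab hcd,
      _, lf_cube_mem_gmap hab hcd, 1, a, b, one_ne_zero, hab, by rw [map_one, one_mul]⟩
  refine ⟨fun a b c d a' b' c' d' => gmap_congr, hvalue, ?_, fun W => ⟨?_, ?_⟩⟩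
  · intro a b c d a' b' c' d' hab hcd hab' hcd' h
    have h₁ := cross_eq_of_lf_cube_mem_gmap hab hcd (h ▸ lf_cube_mem_gmap hab' hcd')
    exact ⟨h₁, cross_eq_of_gmap_eq hab (h.trans (gmap_congr hab' hcd' hab hcd' h₁.symm rfl))⟩
  · rintro ⟨hW, p, hpW, hp⟩
    obtain ⟨a, b, hab, hl⟩ := exists_lf_cube_mem_of_isPerfectCube hpW hp
    obtain ⟨c, d, hcd, rfl⟩ := exists_gmap_eq_of_isLagrangian hW hab hl
    exact ⟨a, b, c, d, hab, hcd, rfl⟩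
  · rintro ⟨a, b, c, d, hab, hcd, rfl⟩
    exact hvalue a b c d hab hcd
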